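/- Fix a positive integer n. Every subset of {0,…,n−1} is reachable from the empty set by finitely many applications of the append and swap generation operations. -/
import Mathlib


/-- The two generation operations of the TopL min-heap search on flip sets
`S ⊆ {0,…,n−1}`: (append) adjoin `i`, where `i = 0` if `S` is empty and
`i = max S + 1` otherwise, allowed only if `i ≤ n − 1`; (swap) replace
`m = max S` by `m + 1`, allowed only if `m + 1 ≤ n − 1`. -/
inductive TopLStep (n : ℕ) : Finset ℕ → Finset ℕ → Prop
  | append (S : Finset ℕ) (i : ℕ)
      (hi : if hS : S.Nonempty then i = S.max' hS + 1 else i = 0)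
      (hin : i < n) : TopLStep n S (S ∪ {i})
  | swap (S : Finset ℕ) (hS : S.Nonempty) (h : S.max' hS + 1 < n) :
      TopLStep n S ((S \ {S.max' hS}) ∪ {S.max' hS + 1})

open Relation

lemma swap_chain (n : ℕ) (T : Finset ℕ) (a : ℕ) (ha : ∀ x ∈ T, x < a) :
    ∀ b, a ≤ b → b < n →
      Relation.ReflTransGen (TopLStep n) (T ∪ {a}) (T ∪ {b}) := by
  intro b
  induction b with
  | zero =>
    intro hab _
    have : a = 0 := Nat.le_zero.mp hab
    subst this; exact .refl
  | succ b ih =>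
    intro hab hbn
    rcases Nat.lt_or_ge a (b + 1) with h | h
    · have hb : a ≤ b := Nat.lt_succ_iff.mp h
      refine (ih hb (Nat.lt_of_succ_lt hbn)).tail ?_
      have hne : (T ∪ {b}).Nonempty := ⟨b, by simp⟩
      have hmax : (T ∪ {b}).max' hne = b := by
        apply le_antisymm
        · apply Finset.max'_le
          intro x hx
          rcases Finset.mem_union.mp hx with hx | hx
          · exact le_trans (le_of_lt (ha x hx)) hb
          · simp only [Finset.mem_singleton] at hx; omega
        · exact Finset.le_max' _ _ (by simp)
      have hstep := TopLStep.swap (n := n) (T ∪ {b}) hne (by rw [hmax]; exact hbn)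
      rw [hmax] at hstep
      convert hstep using 1
      ext x
      simp only [Finset.mem_union, Finset.mem_sdiff, Finset.mem_singleton]
      constructor
      · rintro (hx | rfl)
        · exact Or.inl ⟨Or.inl hx, by rintro rfl; have := ha _ hx; omega⟩
        · exact Or.inr rfl
      · rintro (⟨hx | rfl, hne'⟩ | rfl)
        · exact Or.inl hx
        · omega
        · exact Or.inr rfl
    · have : a = b + 1 := le_antisymm hab h
      subst this; exact .refl

/-- every subset of `{0,…,n−1}` is reachable from the empty set
by finitely many applications of the append and swap operations. -/
theorem every_subset_reachable (n : ℕ) (hn : 0 < n) (S : Finset ℕ)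
    (hS : S ⊆ Finset.range n) :
    Relation.ReflTransGen (TopLStep n) ∅ S := by
  induction S using Finset.strongInduction with
  | _ S ih =>
    rcases S.eq_empty_or_nonempty with rfl | hne
    · exact .refl
    · have hS' := hS
      set M := S.max' hne with hM
      set T := S.erase M with hT
      have hTS : T ⊂ S := Finset.erase_ssubset (S.max'_mem hne)
      have hreach := ih T hTS (fun x hx => hS' (Finset.mem_of_mem_erase hx))
      have hMn : M < n := Finset.mem_range.mp (hS' (S.max'_mem hne))
      have hSeq : T ∪ {M} = S := by
        rw [hT]
        ext x
        simp only [Finset.mem_union, Finset.mem_erase, Finset.mem_singleton]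
        constructor
        · rintro (⟨_, hx⟩ | rfl)
          · exact hx
          · exact S.max'_mem hne
        · intro hx
          by_cases hxM : x = M
          · exact Or.inr hxM
          · exact Or.inl ⟨hxM, hx⟩
      rcases T.eq_empty_or_nonempty with hTe | hTne
      · have step1 : TopLStep n ∅ (∅ ∪ {0}) := by
          refine TopLStep.append ∅ 0 ?_ hn
          rw [dif_neg (by simp)]
        have chain := swap_chain n ∅ 0 (by simp) M (Nat.zero_le M) hMn
        rw [← hSeq, hTe]
        exact (ReflTransGen.single step1).trans chain
      · have hmM : T.max' hTne + 1 ≤ M := by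
          have h1 : T.max' hTne ∈ T := T.max'_mem hTne
          have h2 : T.max' hTne ≤ M := S.le_max' _ (Finset.mem_of_mem_erase h1)
          have h3 : T.max' hTne ≠ M := (Finset.mem_erase.mp h1).1
          omega
        have step1 : TopLStep n T (T ∪ {T.max' hTne + 1}) := by
          refine TopLStep.append T _ ?_ (by omega)
          rw [dif_pos hTne]
        have hlt : ∀ x ∈ T, x < T.max' hTne + 1 :=
          fun x hx => Nat.lt_succ_of_le (T.le_max' x hx)
        have chain := swap_chain n T (T.max' hTne + 1) hlt M hmM hMn
        rw [← hSeq]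
        exact (hreach.tail step1).trans chain
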